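/- arXiv:math/0406533 — 5 statements merged into one kernel-verified Lean document; each statement's English description precedes it below -/
import Mathlib

section
/- Let f_1,…,f_n ∈ ℂ[θ_1,…,θ_d], let u_1,…,u_n be nonzero integers, and let x ∈ ℂ^d be a point such that the set S = {i : f_i(x) = 0} is nonempty and the gradient vectors {∇f_i(x) : i ∈ S} are linearly independent over ℂ. Then there is an open neighborhood W of x in ℂ^d (Euclidean topology) containing no critical point of f = f_1^{u_1}⋯f_n^{u_n}; that is, there is no θ ∈ W with f_i(θ) ≠ 0 for all i and ∑_{i=1}^n u_i·(∂f_i/∂θ_j)(θ)/f_i(θ) = 0 for all j = 1,…,d. -/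
open MvPolynomial Filter

noncomputable def Complex.abs : AbsoluteValue ℂ ℝ :=
  IsAbsoluteValue.toAbsoluteValue (norm : ℂ → ℝ)

theorem Complex.continuous_abs : Continuous Complex.abs := continuous_norm

theorem Complex.abs_intCast (n : ℤ) : Complex.abs (n : ℂ) = |(n : ℝ)| := Complex.norm_intCast n

/-- If at a point `x ∈ ℂ^d` the vanishing set `S = {i : fᵢ(x) = 0}` is
nonempty and the gradients `∇fᵢ(x)`, `i ∈ S`, are linearly independent over `ℂ`, then some
Euclidean-open neighborhood `W` of `x` contains no critical point of `f₁^{u₁} ⋯ f_n^{u_n}`. -/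
theorem no_critical_point_near_gnc_point
    (d n : ℕ) (f : Fin n → MvPolynomial (Fin d) ℂ) (u : Fin n → ℤ) (hu : ∀ i, u i ≠ 0)
    (x : Fin d → ℂ) (S : Set (Fin n)) (hS : S = {i | eval x (f i) = 0})
    (hSne : S.Nonempty)
    (hind : LinearIndependent ℂ
      (fun i : S => fun j : Fin d => eval x (pderiv j (f (i : Fin n))))) :
    ∃ W : Set (Fin d → ℂ), IsOpen W ∧ x ∈ W ∧
      ∀ θ ∈ W, ¬ ((∀ i, eval θ (f i) ≠ 0) ∧
        ∀ j : Fin d, ∑ i, (u i : ℂ) * eval θ (pderiv j (f i)) / eval θ (f i) = 0) := by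
  classical
  subst hS
  obtain ⟨i₀, hi₀⟩ := hSne
  have hi₀0 : eval x (f i₀) = 0 := hi₀
  -- the gradient family
  set v : {i : Fin n // eval x (f i) = 0} → (Fin d → ℂ) :=
    fun i => fun j => eval x (pderiv j (f (i : Fin n))) with hv
  have hind' : LinearIndependent ℂ v := hind
  have hb := (linearIndepOn_id_range_iff hind'.injective).mpr hind'
  have hmem : ∀ i : {i : Fin n // eval x (f i) = 0},
      v i ∈ hb.extend (Set.subset_univ _) :=
    fun i => hb.subset_extend _ (Set.mem_range_self i)
  set B := Module.Basis.extend hb with hB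
  set φ : {i : Fin n // eval x (f i) = 0} → (Fin d → ℂ) →ₗ[ℂ] ℂ :=
    fun k => B.coord ⟨v k, hmem k⟩ with hφdef
  have hφ : ∀ i k : {i : Fin n // eval x (f i) = 0},
      φ k (v i) = if i = k then 1 else 0 := by
    intro i k
    have hBi : B ⟨v i, hmem i⟩ = v i := Module.Basis.extend_apply_self hb ⟨v i, hmem i⟩
    rw [hφdef]
    simp only
    rw [← hBi, Module.Basis.coord_apply, Module.Basis.repr_self, Finsupp.single_apply]
    by_cases h : i = k
    · subst h; simp
    · rw [if_neg, if_neg h]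
      intro hc
      exact h (hind'.injective (by simpa using hc.symm)).symm
  -- evaluation maps
  set G : Fin n → (Fin d → ℂ) → (Fin d → ℂ) :=
    fun i θ => fun j => eval θ (pderiv j (f i)) with hG
  have hGcont : ∀ i, Continuous (G i) := by
    intro i; rw [hG]; exact continuous_pi fun j => MvPolynomial.continuous_eval _
  -- the scalar functions
  set A : Fin n → Fin n → (Fin d → ℂ) → ℂ :=
    fun i k θ => if hk : eval x (f k) = 0 then φ ⟨k, hk⟩ (G i θ) else 0 with hA
  have hAcont : ∀ i k, Continuous (fun θ => A i k θ) := by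
    intro i k
    rw [hA]
    by_cases hk : eval x (f k) = 0
    · simp only [dif_pos hk]
      exact ((φ ⟨k, hk⟩).continuous_of_finiteDimensional).comp (hGcont i)
    · simp only [dif_neg hk]; exact continuous_const
  have hGx : ∀ (i : Fin n) (hi : eval x (f i) = 0), G i x = v ⟨i, hi⟩ := fun i hi => rfl
  have hAx : ∀ (i k : Fin n) (hi : eval x (f i) = 0) (hk : eval x (f k) = 0),
      A i k x = if i = k then 1 else 0 := by
    intro i k hi hk
    rw [hA]
    simp only [dif_pos hk]
    rw [hGx i hi, hφ ⟨i, hi⟩ ⟨k, hk⟩]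
    by_cases h : i = k
    · subst h; simp
    · rw [if_neg h, if_neg (by simpa using h)]
  -- the finite set of vanishing indices
  set s : Finset (Fin n) := Finset.univ.filter (fun i => eval x (f i) = 0) with hs
  have hmem_s : ∀ i, i ∈ s ↔ eval x (f i) = 0 := by
    intro i; rw [hs]; simp
  have hi₀s : i₀ ∈ s := (hmem_s i₀).mpr hi₀0
  set m : ℝ := (s.card : ℝ) with hm
  have hm1 : (1 : ℝ) ≤ m := by
    rw [hm]
    exact_mod_cast Nat.one_le_iff_ne_zero.mpr (Finset.card_ne_zero_of_mem hi₀s)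
  set ε : ℝ := (4 * m)⁻¹ with hε
  have hεpos : 0 < ε := by rw [hε]; exact inv_pos.mpr (by linarith)
  set Bc : ℝ := 1 + ∑ i : Fin n, ∑ k ∈ s,
      Complex.abs ((u i : ℂ) * A i k x / eval x (f i)) with hBc
  have hBc1 : (1 : ℝ) ≤ Bc := by
    rw [hBc]
    have : (0:ℝ) ≤ ∑ i : Fin n, ∑ k ∈ s, Complex.abs ((u i : ℂ) * A i k x / eval x (f i)) :=
      Finset.sum_nonneg fun i _ => Finset.sum_nonneg fun k _ => AbsoluteValue.nonneg _ _
    linarith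
  have hBcpos : 0 < Bc := lt_of_lt_of_le one_pos hBc1
  have hn0 : (0:ℝ) ≤ (n:ℝ) := Nat.cast_nonneg n
  have hmnB : (0:ℝ) ≤ m * (n * Bc) := mul_nonneg (by linarith) (mul_nonneg hn0 hBcpos.le)
  set δ : ℝ := (4 * (m * (n * Bc)) + 1)⁻¹ with hδ
  have hδpos : 0 < δ := by rw [hδ]; exact inv_pos.mpr (by linarith)
  -- the term bound
  have hterm_le : ∀ (i k : Fin n), k ∈ s →
      Complex.abs ((u i : ℂ) * A i k x / eval x (f i)) < Bc := by
    intro i k hk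
    have h1 : Complex.abs ((u i : ℂ) * A i k x / eval x (f i))
        ≤ ∑ k ∈ s, Complex.abs ((u i : ℂ) * A i k x / eval x (f i)) :=
      Finset.single_le_sum (f := fun k' => Complex.abs ((u i : ℂ) * A i k' x / eval x (f i)))
        (fun k' _ => AbsoluteValue.nonneg _ _) hk
    have h2 : (∑ k ∈ s, Complex.abs ((u i : ℂ) * A i k x / eval x (f i)))
        ≤ ∑ i : Fin n, ∑ k ∈ s, Complex.abs ((u i : ℂ) * A i k x / eval x (f i)) :=
      Finset.single_le_sum
        (f := fun i' => ∑ k ∈ s, Complex.abs ((u i' : ℂ) * A i' k x / eval x (f i')))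
        (fun i' _ => Finset.sum_nonneg fun k _ => AbsoluteValue.nonneg _ _)
        (Finset.mem_univ i)
    rw [hBc]; linarith
  -- eventual conditions
  have E1 : ∀ᶠ θ in nhds x, ∀ k : Fin n, eval x (f k) = 0 →
      1/2 < Complex.abs (A k k θ) := by
    rw [eventually_all]
    intro k
    by_cases hk : eval x (f k) = 0
    · have hval : Complex.abs (A k k x) = 1 := by rw [hAx k k hk hk]; simp
      have hc : ContinuousAt (fun θ => Complex.abs (A k k θ)) x :=
        (Complex.continuous_abs.comp (hAcont k k)).continuousAt
      have hc' : Filter.Tendsto (fun θ => Complex.abs (A k k θ)) (nhds x) (nhds 1) := by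
        rw [← hval]; exact hc
      exact (hc'.eventually (eventually_gt_nhds (by norm_num))).mono fun θ h _ => h
    · exact Filter.Eventually.of_forall fun θ h => absurd h hk
  have E2 : ∀ᶠ θ in nhds x, ∀ i k : Fin n, eval x (f i) = 0 → eval x (f k) = 0 →
      i ≠ k → Complex.abs (A i k θ) < ε := by
    rw [eventually_all]
    intro i
    rw [eventually_all]
    intro k
    by_cases hik : eval x (f i) = 0 ∧ eval x (f k) = 0 ∧ i ≠ k
    · obtain ⟨hi, hk, hne⟩ := hik
      have hval : Complex.abs (A i k x) = 0 := by rw [hAx i k hi hk, if_neg hne]; simp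
      have hc : Filter.Tendsto (fun θ => Complex.abs (A i k θ)) (nhds x) (nhds 0) := by
        rw [← hval]; exact (Complex.continuous_abs.comp (hAcont i k)).continuousAt
      exact (hc.eventually (eventually_lt_nhds hεpos)).mono fun θ h _ _ _ => h
    · refine Filter.Eventually.of_forall fun θ hi hk hne => absurd ⟨hi, hk, hne⟩ hik
  have E3 : ∀ᶠ θ in nhds x, ∀ i k : Fin n, eval x (f i) ≠ 0 → k ∈ s →
      Complex.abs ((u i : ℂ) * A i k θ / eval θ (f i)) < Bc := by
    rw [eventually_all]
    intro i
    rw [eventually_all]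
    intro k
    by_cases hik : eval x (f i) ≠ 0 ∧ k ∈ s
    · obtain ⟨hi, hk⟩ := hik
      have hc : ContinuousAt (fun θ => (u i : ℂ) * A i k θ / eval θ (f i)) x :=
        ((continuous_const.mul (hAcont i k)).continuousAt).div
          (MvPolynomial.continuous_eval _).continuousAt hi
      have hc' : Filter.Tendsto (fun θ => Complex.abs ((u i : ℂ) * A i k θ / eval θ (f i)))
          (nhds x) (nhds (Complex.abs ((u i : ℂ) * A i k x / eval x (f i)))) :=
        (Complex.continuous_abs.continuousAt.comp hc)
      exact (hc'.eventually (eventually_lt_nhds (hterm_le i k hk))).mono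
        fun θ h _ _ => h
    · refine Filter.Eventually.of_forall fun θ hi hk => absurd ⟨hi, hk⟩ hik
  have E4 : ∀ᶠ θ in nhds x, Complex.abs (eval θ (f i₀)) < δ := by
    have hc : Filter.Tendsto (fun θ => Complex.abs (eval θ (f i₀))) (nhds x) (nhds 0) := by
      have h0 : Complex.abs (eval x (f i₀)) = 0 := by rw [hi₀0]; simp
      have hco : Continuous (fun θ => Complex.abs (eval θ (f i₀))) :=
        Complex.continuous_abs.comp (MvPolynomial.continuous_eval (f i₀))
      have := hco.tendsto x
      rwa [h0] at this
    exact hc.eventually (eventually_lt_nhds hδpos)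
  clear_value v B φ G A s m ε Bc δ
  -- assemble the neighborhood
  have Emain : ∀ᶠ θ in nhds x, ¬ ((∀ i, eval θ (f i) ≠ 0) ∧
      ∀ j : Fin d, ∑ i, (u i : ℂ) * eval θ (pderiv j (f i)) / eval θ (f i) = 0) := by
    filter_upwards [E1, E2, E3, E4] with θ H1 H2 H3 H4
    rintro ⟨hne, heq⟩
    -- the coefficients
    set c : Fin n → ℂ := fun i => (u i : ℂ) / eval θ (f i) with hc
    set t : Fin n → ℝ := fun i => Complex.abs (c i) with ht
    have ht0 : ∀ i, 0 ≤ t i := fun i => AbsoluteValue.nonneg _ _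
    set M : ℝ := ∑ i ∈ s, t i with hM
    clear_value M
    have hM0 : 0 ≤ M := by rw [hM]; exact Finset.sum_nonneg fun i _ => ht0 i
    -- the sum over all i vanishes
    have hker : (∑ i : Fin n, c i • G i θ) = 0 := by
      funext j
      have hj := heq j
      simp only [Finset.sum_apply, Pi.smul_apply, Pi.zero_apply, smul_eq_mul, hc, hG]
      rw [← hj]
      exact Finset.sum_congr rfl fun i _ => div_mul_eq_mul_div _ _ _
    have key : ∀ k : Fin n, eval x (f k) = 0 →
        ∑ i : Fin n, c i * A i k θ = 0 := by
      intro k hk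
      have hstep : ∑ i : Fin n, c i * A i k θ
          = φ ⟨k, hk⟩ (∑ i : Fin n, c i • G i θ) := by
        rw [map_sum]
        refine Finset.sum_congr rfl fun i _ => ?_
        rw [map_smul, smul_eq_mul, hA]
        simp only [dif_pos hk]
      rw [hstep, hker, map_zero]
    -- the per-row estimate
    have hbound : ∀ k ∈ s, (1/2) * t k ≤ ε * M + n * Bc := by
      intro k hk
      have hk0 : eval x (f k) = 0 := (hmem_s k).mp hk
      have h0 := key k hk0
      have hsplit : c k * A k k θ +
          ((∑ i ∈ s.erase k, c i * A i k θ) + ∑ i ∈ sᶜ, c i * A i k θ) = 0 := by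
        calc c k * A k k θ + ((∑ i ∈ s.erase k, c i * A i k θ) + ∑ i ∈ sᶜ, c i * A i k θ)
            = (∑ i ∈ s, c i * A i k θ) + ∑ i ∈ sᶜ, c i * A i k θ := by
              rw [← add_assoc, Finset.add_sum_erase s (fun i => c i * A i k θ) hk]
          _ = ∑ i : Fin n, c i * A i k θ := Finset.sum_add_sum_compl s _
          _ = 0 := h0
      have heqk : c k * A k k θ =
          -((∑ i ∈ s.erase k, c i * A i k θ) + ∑ i ∈ sᶜ, c i * A i k θ) :=
        eq_neg_of_add_eq_zero_left hsplit
      have habs : t k * Complex.abs (A k k θ) ≤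
          (∑ i ∈ s.erase k, Complex.abs (c i * A i k θ)) +
            ∑ i ∈ sᶜ, Complex.abs (c i * A i k θ) := by
        calc t k * Complex.abs (A k k θ) = Complex.abs (c k * A k k θ) := (map_mul _ _ _).symm
          _ = Complex.abs ((∑ i ∈ s.erase k, c i * A i k θ) + ∑ i ∈ sᶜ, c i * A i k θ) := by
              rw [heqk, AbsoluteValue.map_neg]
          _ ≤ Complex.abs (∑ i ∈ s.erase k, c i * A i k θ) +
              Complex.abs (∑ i ∈ sᶜ, c i * A i k θ) := Complex.abs.add_le _ _
          _ ≤ _ := add_le_add (Complex.abs.sum_le _ _) (Complex.abs.sum_le _ _)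
      have hS1 : (∑ i ∈ s.erase k, Complex.abs (c i * A i k θ)) ≤ ε * M := by
        calc (∑ i ∈ s.erase k, Complex.abs (c i * A i k θ))
            ≤ ∑ i ∈ s.erase k, t i * ε := by
              refine Finset.sum_le_sum fun i hi => ?_
              rw [map_mul]
              exact mul_le_mul_of_nonneg_left
                (le_of_lt (H2 i k ((hmem_s i).mp (Finset.mem_of_mem_erase hi)) hk0
                  (Finset.ne_of_mem_erase hi))) (ht0 i)
          _ = ε * ∑ i ∈ s.erase k, t i := by rw [← Finset.sum_mul, mul_comm]
          _ ≤ ε * M := by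
              refine mul_le_mul_of_nonneg_left ?_ hεpos.le
              rw [hM]
              exact Finset.sum_le_sum_of_subset_of_nonneg (Finset.erase_subset k s)
                fun i _ _ => ht0 i
      have hS2 : (∑ i ∈ sᶜ, Complex.abs (c i * A i k θ)) ≤ n * Bc := by
        calc (∑ i ∈ sᶜ, Complex.abs (c i * A i k θ)) ≤ ∑ _i ∈ sᶜ, Bc := by
              refine Finset.sum_le_sum fun i hi => ?_
              have hi' : eval x (f i) ≠ 0 := by
                intro h; exact (Finset.mem_compl.mp hi) ((hmem_s i).mpr h)
              have hB3 := H3 i k hi' hk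
              have : c i * A i k θ = (u i : ℂ) * A i k θ / eval θ (f i) := by
                rw [hc]; rw [div_mul_eq_mul_div]
              rw [this]
              exact le_of_lt hB3
          _ = (sᶜ.card : ℝ) * Bc := by rw [Finset.sum_const, nsmul_eq_mul]
          _ ≤ n * Bc := by
              refine mul_le_mul_of_nonneg_right ?_ hBcpos.le
              have := Finset.card_le_univ (sᶜ)
              calc (sᶜ.card : ℝ) ≤ (Finset.univ (α := Fin n)).card := by exact_mod_cast this
                _ = n := by simp
      have hAkk : 1/2 < Complex.abs (A k k θ) := H1 k hk0
      have : (1/2) * t k ≤ t k * Complex.abs (A k k θ) := by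
        rw [mul_comm (1/2) (t k)]
        exact mul_le_mul_of_nonneg_left hAkk.le (ht0 k)
      linarith
    -- sum the estimates
    have hsum : (1/2) * M ≤ m * (ε * M + n * Bc) := by
      calc (1/2) * M = ∑ k ∈ s, (1/2) * t k := by rw [hM, Finset.mul_sum]
        _ ≤ ∑ _k ∈ s, (ε * M + n * Bc) := Finset.sum_le_sum hbound
        _ = (s.card : ℝ) * (ε * M + n * Bc) := by rw [Finset.sum_const, nsmul_eq_mul]
        _ = m * (ε * M + n * Bc) := by rw [hm]
    have hme : m * ε = 1/4 := by
      rw [hε]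
      rw [mul_inv]
      rw [show m * (4⁻¹ * m⁻¹) = (m * m⁻¹) * 4⁻¹ by ring]
      rw [mul_inv_cancel₀ (by linarith : m ≠ 0)]
      norm_num
    have hMle : M ≤ 4 * (m * (n * Bc)) := by
      have hexp : m * (ε * M + n * Bc) = (m * ε) * M + m * (n * Bc) := by ring
      rw [hexp, hme] at hsum
      linarith
    -- the contradiction at i₀
    have hti₀ : t i₀ ≤ M := by rw [hM]; exact Finset.single_le_sum (fun i _ => ht0 i) hi₀s
    have hfθ : (0:ℝ) < Complex.abs (eval θ (f i₀)) := AbsoluteValue.pos _ (hne i₀)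
    have h1f : 1 / Complex.abs (eval θ (f i₀)) ≤ t i₀ := by
      have htval : t i₀ = Complex.abs ((u i₀ : ℂ)) / Complex.abs (eval θ (f i₀)) := by
        rw [ht]
        simp only [hc]
        exact map_div₀ _ _ _
      have hu1 : (1:ℝ) ≤ Complex.abs ((u i₀ : ℂ)) := by
        rw [Complex.abs_intCast]
        exact_mod_cast Int.one_le_abs (hu i₀)
      rw [htval]
      exact (div_le_div_iff_of_pos_right hfθ).mpr hu1
    have hfrac : 1/δ < 1 / Complex.abs (eval θ (f i₀)) := one_div_lt_one_div_of_lt hfθ H4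
    have hδval : 1/δ = 4 * (m * ((n:ℝ) * Bc)) + 1 := by rw [hδ, one_div, inv_inv]
    rw [hδval] at hfrac
    linarith
  obtain ⟨W, hW1, hW2, hW3⟩ := eventually_nhds_iff.mp Emain
  exact ⟨W, hW2, hW3, fun θ hθ => hW1 θ hθ⟩
end

section
/- Let f_1,…,f_n ∈ ℝ[θ_1,…,θ_d] be real polynomials, u_1,…,u_n positive integers, and f = f_1^{u_1}⋯f_n^{u_n}. Then every bounded connected component of V_ℝ = ℝ^d ∖ ⋃_{i=1}^n {f_i = 0} contains at least one point θ at which all partial derivatives of f vanish: (∂f/∂θ_j)(θ) = 0 for j = 1,…,d. Consequently, the number of bounded connected components of V_ℝ is at most the number of critical points of f lying in V_ℝ. -/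
open MvPolynomial

/-- The evaluation of a multivariate polynomial has the expected Fréchet derivative,
expressed through `pderiv`. -/
lemma hasFDerivAt_eval_mv {d : ℕ} (p : MvPolynomial (Fin d) ℝ) (θ : Fin d → ℝ) :
    HasFDerivAt (fun x : Fin d → ℝ => eval x p)
      (∑ j : Fin d, eval θ (pderiv j p) •
        (ContinuousLinearMap.proj j : (Fin d → ℝ) →L[ℝ] ℝ)) θ := by
  induction p using MvPolynomial.induction_on with
  | C a =>
      simp only [eval_C, pderiv_C, map_zero, zero_smul, Finset.sum_const_zero]
      exact hasFDerivAt_const a θ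
  | add p q hp hq =>
      have := hp.add hq
      convert this using 1
      rotate_left 5
      · ext x; simp
      · simp [map_add, add_smul, Finset.sum_add_distrib]
      all_goals rfl
  | mul_X p i hp =>
      classical
      have hXi : HasFDerivAt (fun x : Fin d → ℝ => x i)
          (ContinuousLinearMap.proj i : (Fin d → ℝ) →L[ℝ] ℝ) θ :=
        (ContinuousLinearMap.proj i : (Fin d → ℝ) →L[ℝ] ℝ).hasFDerivAt
      have := hp.mul hXi
      convert this using 1
      rotate_left 5
      · ext x; simp
      · ext z
        simp only [ContinuousLinearMap.coe_sum', Finset.sum_apply,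
          ContinuousLinearMap.coe_smul', Pi.smul_apply, ContinuousLinearMap.proj_apply,
          ContinuousLinearMap.add_apply, smul_eq_mul, pderiv_mul, map_add, map_mul, eval_X,
          pderiv_X]
        simp only [Pi.single_apply, apply_ite (eval θ), map_one, map_zero, mul_ite,
          mul_one, mul_zero, ite_mul, zero_mul, add_mul, Finset.sum_add_distrib,
          Finset.sum_ite_eq, Finset.mem_univ, if_true, Finset.mul_sum]
        rw [add_comm]
        congr 1
        exact Finset.sum_congr rfl fun j _ => by ring
      all_goals rfl
/-- At a local extremum of the evaluation of a multivariate polynomial,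
all partial derivatives vanish. -/
lemma pderiv_eval_eq_zero_of_isLocalExtr {d : ℕ} {p : MvPolynomial (Fin d) ℝ}
    {θ : Fin d → ℝ} (h : IsLocalExtr (fun x : Fin d → ℝ => eval x p) θ) (j : Fin d) :
    eval θ (pderiv j p) = 0 := by
  classical
  have h0 := h.hasFDerivAt_eq_zero (hasFDerivAt_eval_mv p θ)
  have := congrArg (fun L : (Fin d → ℝ) →L[ℝ] ℝ => L (Pi.single j 1)) h0
  simp only [ContinuousLinearMap.coe_sum', Finset.sum_apply,
    ContinuousLinearMap.coe_smul', Pi.smul_apply, ContinuousLinearMap.proj_apply,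
    ContinuousLinearMap.zero_apply, smul_eq_mul] at this
  rwa [Finset.sum_eq_single j (fun k _ hk => by simp [Pi.single_eq_of_ne hk])
    (by simp), Pi.single_eq_same, mul_one] at this

/-- Every bounded connected component of the complement
`V_ℝ = ℝ^d ∖ ⋃ᵢ {fᵢ = 0}` contains a point where all partial derivatives of
`f = f₁^{u₁} ⋯ f_n^{u_n}` vanish; consequently the number of bounded components of `V_ℝ`
is at most the number of critical points of `f` in `V_ℝ`. -/
theorem bounded_regions_le_critical_points
    (d n : ℕ) (f : Fin n → MvPolynomial (Fin d) ℝ) (u : Fin n → ℕ) (hu : ∀ i, 0 < u i) :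
    (∀ x : Fin d → ℝ, (∀ i, eval x (f i) ≠ 0) →
      Bornology.IsBounded (connectedComponentIn {θ : Fin d → ℝ | ∀ i, eval θ (f i) ≠ 0} x) →
      ∃ θ ∈ connectedComponentIn {θ : Fin d → ℝ | ∀ i, eval θ (f i) ≠ 0} x,
        ∀ j : Fin d, eval θ (pderiv j (∏ i, f i ^ u i)) = 0) ∧
    Cardinal.mk {K : Set (Fin d → ℝ) | Bornology.IsBounded K ∧
        ∃ x : Fin d → ℝ, (∀ i, eval x (f i) ≠ 0) ∧
          K = connectedComponentIn {θ : Fin d → ℝ | ∀ i, eval θ (f i) ≠ 0} x} ≤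
      Cardinal.mk {θ : Fin d → ℝ | (∀ i, eval θ (f i) ≠ 0) ∧
        ∀ j : Fin d, eval θ (pderiv j (∏ i, f i ^ u i)) = 0} := by
  set V : Set (Fin d → ℝ) := {θ : Fin d → ℝ | ∀ i, eval θ (f i) ≠ 0} with hV
  set F : (Fin d → ℝ) → ℝ := fun x => eval x (∏ i, f i ^ u i) with hF
  have hVopen : IsOpen V := by
    have : V = ⋂ i, (fun x => eval x (f i)) ⁻¹' {y : ℝ | y ≠ 0} := by
      ext θ; simp [hV]
    rw [this]
    exact isOpen_iInter_of_finite fun i => isOpen_ne.preimage (continuous_eval (f i))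
  have hFcont : Continuous F := continuous_eval _
  have hFne : ∀ y ∈ V, F y ≠ 0 := by
    intro y hy
    simp only [hF, map_prod, map_pow]
    exact Finset.prod_ne_zero_iff.mpr fun i _ => pow_ne_zero _ (hy i)
  have main : ∀ x : Fin d → ℝ, (∀ i, eval x (f i) ≠ 0) →
      Bornology.IsBounded (connectedComponentIn V x) →
      ∃ θ ∈ connectedComponentIn V x,
        ∀ j : Fin d, eval θ (pderiv j (∏ i, f i ^ u i)) = 0 := by
    intro x hx hbdd
    set C := connectedComponentIn V x with hC
    have hxV : x ∈ V := hx
    have hxC : x ∈ C := mem_connectedComponentIn hxV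
    have hCopen : IsOpen C := hVopen.connectedComponentIn
    have hCsub : C ⊆ V := connectedComponentIn_subset V x
    have hK : IsCompact (closure C) := hbdd.isCompact_closure
    obtain ⟨θ, hθK, hmax⟩ := hK.exists_isMaxOn ⟨x, subset_closure hxC⟩
      ((continuous_abs.comp hFcont).continuousOn)
    have hmax' : ∀ y ∈ closure C, |F y| ≤ |F θ| := hmax
    have hFθ : F θ ≠ 0 := by
      intro h0
      have := hmax' x (subset_closure hxC)
      rw [h0, abs_zero] at this
      exact hFne x hxV (abs_nonpos_iff.mp this)
    have hθV : θ ∈ V := by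
      intro i
      intro hi
      apply hFθ
      simp only [hF, map_prod, map_pow]
      exact Finset.prod_eq_zero (Finset.mem_univ i) (by
        rw [hi]; exact zero_pow (hu i).ne')
    have hθC : θ ∈ C := by
      have hopen' : IsOpen (connectedComponentIn V θ) := hVopen.connectedComponentIn
      have hθmem : θ ∈ connectedComponentIn V θ := mem_connectedComponentIn hθV
      obtain ⟨z, hz1, hz2⟩ := mem_closure_iff.mp hθK _ hopen' hθmem
      have e1 : connectedComponentIn V θ = connectedComponentIn V z :=
        connectedComponentIn_eq hz1
      have e2 : connectedComponentIn V x = connectedComponentIn V z :=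
        connectedComponentIn_eq hz2
      rw [hC, e2, ← e1]
      exact hθmem
    have hCnhds : C ∈ nhds θ := hCopen.mem_nhds hθC
    have hextr : IsLocalExtr F θ := by
      rcases lt_or_gt_of_ne hFθ with hneg | hpos
      · left
        filter_upwards [hCnhds] with y hy
        have : |F y| ≤ |F θ| := hmax' y (subset_closure hy)
        have h1 : -|F y| ≥ -|F θ| := by linarith
        calc F θ = -|F θ| := by rw [abs_of_neg hneg]; ring
          _ ≤ -|F y| := h1
          _ ≤ F y := neg_abs_le _
      · right
        filter_upwards [hCnhds] with y hy
        calc F y ≤ |F y| := le_abs_self _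
          _ ≤ |F θ| := hmax' y (subset_closure hy)
          _ = F θ := abs_of_pos hpos
    exact ⟨θ, hθC, fun j => pderiv_eval_eq_zero_of_isLocalExtr hextr j⟩
  refine ⟨main, ?_⟩
  have key : ∀ K : {K : Set (Fin d → ℝ) | Bornology.IsBounded K ∧
      ∃ x : Fin d → ℝ, (∀ i, eval x (f i) ≠ 0) ∧ K = connectedComponentIn V x},
      ∃ θ : {θ : Fin d → ℝ | (∀ i, eval θ (f i) ≠ 0) ∧
        ∀ j : Fin d, eval θ (pderiv j (∏ i, f i ^ u i)) = 0}, (θ : Fin d → ℝ) ∈ (K : Set (Fin d → ℝ)) := by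
    rintro ⟨K, hKb, x, hx, rfl⟩
    obtain ⟨θ, hθC, hθj⟩ := main x hx hKb
    exact ⟨⟨θ, ⟨fun i => connectedComponentIn_subset V x hθC i, hθj⟩⟩, hθC⟩
  choose g hg using key
  apply Cardinal.mk_le_of_injective (f := g)
  rintro K₁ K₂ hEq
  obtain ⟨-, x₁, -, h₁⟩ := K₁.2
  obtain ⟨-, x₂, -, h₂⟩ := K₂.2
  have m1 := hg K₁
  have m2 := hg K₂
  rw [hEq, h₁] at m1
  rw [h₂] at m2
  apply Subtype.ext
  rw [h₁, h₂]
  exact (connectedComponentIn_eq m1).trans (connectedComponentIn_eq m2).symm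
end

section
/- Let f_i(θ) = c_i + ∑_{j=1}^d a_{ij}θ_j, i = 1,…,n, be affine-linear polynomials with real coefficients, and assume the homogenizations F_i = c_iθ_0 + ∑_{j=1}^d a_{ij}θ_j have common zero set {F_1 = ⋯ = F_n = 0} equal to {0} in ℝ^{d+1}. Then there is a nonempty Zariski-open subset Ω of ℝ^n such that for every u = (u_1,…,u_n) ∈ Ω with all u_i > 0: the set C of points θ ∈ ℂ^d with f_i(θ) ≠ 0 for all i and ∑_{i=1}^n u_i a_{ij}/f_i(θ) = 0 for j = 1,…,d is finite, every point of C is real (lies in ℝ^d), and the cardinality of C equals the number of bounded connected components of ℝ^d ∖ ⋃_{i=1}^n {f_i = 0}. -/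
/-- The set of complex critical points of `∏ᵢ fᵢ^{uᵢ}` for the affine-linear polynomials
`fᵢ(θ) = cᵢ + ∑ⱼ aᵢⱼ θⱼ`: points where no `fᵢ` vanishes and `∑ᵢ uᵢ aᵢⱼ / fᵢ(θ) = 0` for
every `j`. -/
def linearCriticalSet {d n : ℕ} (a : Fin n → Fin d → ℝ) (c : Fin n → ℝ)
    (u : Fin n → ℝ) : Set (Fin d → ℂ) :=
  {θ | (∀ i, (c i : ℂ) + ∑ j, (a i j : ℂ) * θ j ≠ 0) ∧
    ∀ j : Fin d, ∑ i, (u i : ℂ) * (a i j : ℂ) / ((c i : ℂ) + ∑ k, (a i k : ℂ) * θ k) = 0}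

/-- The set of bounded connected components of the complement of the hyperplane
arrangement `{fᵢ = 0}` in `ℝ^d`. -/
def linearBoundedRegions {d n : ℕ} (a : Fin n → Fin d → ℝ) (c : Fin n → ℝ) :
    Set (Set (Fin d → ℝ)) :=
  {K | Bornology.IsBounded K ∧ ∃ x : Fin d → ℝ, (∀ i, c i + ∑ j, a i j * x j ≠ 0) ∧
    K = connectedComponentIn {θ : Fin d → ℝ | ∀ i, c i + ∑ j, a i j * θ j ≠ 0} x}

open Set Topology Filter

namespace MLdeg

variable {d n : ℕ}

/-- value of the i-th affine form -/
def fv (a : Fin n → Fin d → ℝ) (c : Fin n → ℝ) (i : Fin n) (x : Fin d → ℝ) : ℝ :=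
  c i + ∑ j, a i j * x j

/-- complement of the arrangement -/
def Uc (a : Fin n → Fin d → ℝ) (c : Fin n → ℝ) : Set (Fin d → ℝ) :=
  {θ | ∀ i, fv a c i θ ≠ 0}

/-- real critical points -/
def realCrit (a : Fin n → Fin d → ℝ) (c : Fin n → ℝ) (u : Fin n → ℝ) : Set (Fin d → ℝ) :=
  {x | (∀ i, fv a c i x ≠ 0) ∧ ∀ j, ∑ i, u i * a i j / fv a c i x = 0}

/-- open sign cell of x -/
def cell (a : Fin n → Fin d → ℝ) (c : Fin n → ℝ) (x : Fin d → ℝ) : Set (Fin d → ℝ) :=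
  {y | ∀ i, 0 < fv a c i x * fv a c i y}

variable {a : Fin n → Fin d → ℝ} {c : Fin n → ℝ}

lemma continuous_fv (i : Fin n) : Continuous (fv a c i) := by
  unfold fv
  exact continuous_const.add (continuous_finset_sum _ fun j _ =>
    (continuous_const.mul (continuous_apply j)))

lemma isOpen_Uc : IsOpen (Uc a c) := by
  have : Uc a c = ⋂ i, (fv a c i) ⁻¹' {0}ᶜ := by
    ext y; simp [Uc]
  rw [this]
  exact isOpen_iInter_of_finite fun i => (isOpen_compl_singleton).preimage (continuous_fv i)

lemma isOpen_cell (x : Fin d → ℝ) : IsOpen (cell a c x) := by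
  have : cell a c x = ⋂ i, (fun y => fv a c i x * fv a c i y) ⁻¹' (Ioi 0) := by
    ext y; simp [cell]
  rw [this]
  exact isOpen_iInter_of_finite fun i =>
    isOpen_Ioi.preimage (continuous_const.mul (continuous_fv i))

lemma fv_combo (i : Fin n) {s t : ℝ} (hst : s + t = 1) (y z : Fin d → ℝ) :
    fv a c i (s • y + t • z) = s * fv a c i y + t * fv a c i z := by
  unfold fv
  simp only [Pi.add_apply, Pi.smul_apply, smul_eq_mul, mul_add, Finset.sum_add_distrib]
  have h1 : ∑ j, a i j * (s * y j) = s * ∑ j, a i j * y j := by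
    rw [Finset.mul_sum]; exact Finset.sum_congr rfl (fun j _ => by ring)
  have h2 : ∑ j, a i j * (t * z j) = t * ∑ j, a i j * z j := by
    rw [Finset.mul_sum]; exact Finset.sum_congr rfl (fun j _ => by ring)
  rw [h1, h2]
  linear_combination (c i) * hst.symm


lemma convex_cell (x : Fin d → ℝ) : Convex ℝ (cell a c x) := by
  intro y hy z hz s t hs ht hst
  intro i
  rw [fv_combo i hst y z, mul_add]
  have hA := hy i
  have hB := hz i
  have e1 : fv a c i x * (s * fv a c i y) = s * (fv a c i x * fv a c i y) := by ring
  have e2 : fv a c i x * (t * fv a c i z) = t * (fv a c i x * fv a c i z) := by ring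
  rw [e1, e2]
  set A := fv a c i x * fv a c i y
  set B := fv a c i x * fv a c i z
  set m := min A B with hm
  have hmpos : 0 < m := lt_min hA hB
  have : m ≤ s * A + t * B := by
    calc m = (s + t) * m := by rw [hst, one_mul]
    _ = s * m + t * m := by ring
    _ ≤ s * A + t * B := by
        gcongr
        · exact min_le_left A B
        · exact min_le_right A B
  exact hmpos.trans_le this


lemma sign_const {s : Set (Fin d → ℝ)} (hs : IsPreconnected s)
    (hsub : ∀ y ∈ s, ∀ i, fv a c i y ≠ 0) {x y : Fin d → ℝ}
    (hx : x ∈ s) (hy : y ∈ s) (i : Fin n) : 0 < fv a c i x * fv a c i y := by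
  rcases lt_trichotomy (fv a c i x * fv a c i y) 0 with h | h | h
  · exfalso
    have hc : ContinuousOn (fv a c i) s := by
      apply Continuous.continuousOn
      unfold fv
      exact continuous_const.add (continuous_finset_sum _ fun j _ =>
        continuous_const.mul (continuous_apply j))
    rcases mul_neg_iff.mp h with ⟨hp, hn⟩ | ⟨hn, hp⟩
    · obtain ⟨z, hz, hz0⟩ := hs.intermediate_value hy hx hc ⟨hn.le, hp.le⟩
      exact hsub z hz i hz0
    · obtain ⟨z, hz, hz0⟩ := hs.intermediate_value hx hy hc ⟨hn.le, hp.le⟩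
      exact hsub z hz i hz0
  · exfalso
    rcases mul_eq_zero.mp h with h0 | h0
    · exact hsub x hx i h0
    · exact hsub y hy i h0
  · exact h


lemma cell_subset_Uc (x : Fin d → ℝ) : cell a c x ⊆ Uc a c := by
  intro y hy i
  intro h0
  have := hy i
  rw [h0, mul_zero] at this
  exact lt_irrefl 0 this

lemma mem_cell_self {x : Fin d → ℝ} (hx : x ∈ Uc a c) : x ∈ cell a c x := by
  intro i
  exact mul_pos_iff.mpr (by rcases (hx i).lt_or_gt with h | h
                            · exact Or.inr ⟨h, h⟩
                            · exact Or.inl ⟨h, h⟩)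

lemma component_eq_cell {x : Fin d → ℝ} (hx : x ∈ Uc a c) :
    connectedComponentIn (Uc a c) x = cell a c x := by
  apply Subset.antisymm
  · intro y hy
    intro i
    exact sign_const isPreconnected_connectedComponentIn
      (fun z hz => connectedComponentIn_subset _ _ hz)
      (mem_connectedComponentIn hx) hy i
  · exact (convex_cell x).isPreconnected.subset_connectedComponentIn
      (mem_cell_self hx) (cell_subset_Uc x)

/-- the span condition from hzero -/
lemma span_zero (hzero : ∀ (t : ℝ) (θ : Fin d → ℝ), (∀ i, c i * t + ∑ j, a i j * θ j = 0) →
      t = 0 ∧ θ = 0) (v : Fin d → ℝ) (hv : ∀ i, ∑ j, a i j * v j = 0) : v = 0 := by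
  have := hzero 0 v (fun i => by rw [mul_zero, zero_add]; exact hv i)
  exact this.2

lemma fv_sub (i : Fin n) (x y : Fin d → ℝ) :
    fv a c i y - fv a c i x = ∑ j, a i j * (y j - x j) := by
  unfold fv
  rw [Finset.sum_congr rfl (fun j (_ : j ∈ Finset.univ) => mul_sub (a i j) (y j) (x j)),
    Finset.sum_sub_distrib]
  ring

lemma sum_dir {u : Fin n → ℝ} {x : Fin d → ℝ} (hx : x ∈ realCrit a c u) (v : Fin d → ℝ) :
    ∑ i, u i * (∑ j, a i j * v j) / fv a c i x = 0 := by
  have key : ∀ i : Fin n, u i * (∑ j, a i j * v j) / fv a c i x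
      = ∑ j, (u i * a i j / fv a c i x) * v j := by
    intro i
    rw [Finset.mul_sum, Finset.sum_div]
    exact Finset.sum_congr rfl fun j _ => by ring
  rw [Finset.sum_congr rfl (fun i _ => key i), Finset.sum_comm]
  apply Finset.sum_eq_zero
  intro j _
  rw [← Finset.sum_mul, hx.2 j, zero_mul]

/-- injectivity: two real critical points in the same cell coincide -/
lemma crit_inj (hzero : ∀ (t : ℝ) (θ : Fin d → ℝ), (∀ i, c i * t + ∑ j, a i j * θ j = 0) →
      t = 0 ∧ θ = 0) {u : Fin n → ℝ} (hu : ∀ i, 0 < u i)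
    {x y : Fin d → ℝ} (hx : x ∈ realCrit a c u) (hy : y ∈ realCrit a c u)
    (hcell : y ∈ cell a c x) : x = y := by
  have hpq : ∀ i, 0 < fv a c i x * fv a c i y := hcell
  have hp : ∀ i, fv a c i x ≠ 0 := hx.1
  have hq : ∀ i, fv a c i y ≠ 0 := fun i =>
    right_ne_zero_of_mul (ne_of_gt (hpq i))
  have E1 := sum_dir hx (fun j => y j - x j)
  have E2 := sum_dir hy (fun j => y j - x j)
  have hb : ∀ i : Fin n, (∑ j, a i j * (y j - x j)) = fv a c i y - fv a c i x :=
    fun i => (fv_sub i x y).symm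
  have key : ∑ i, u i * (fv a c i y - fv a c i x)^2 / (fv a c i x * fv a c i y) = 0 := by
    have step : ∀ i : Fin n, u i * (fv a c i y - fv a c i x)^2 / (fv a c i x * fv a c i y)
        = u i * (∑ j, a i j * (y j - x j)) / fv a c i x
          - u i * (∑ j, a i j * (y j - x j)) / fv a c i y := by
      intro i
      rw [hb i]
      field_simp [hp i, hq i]
    rw [Finset.sum_congr rfl (fun i _ => step i), Finset.sum_sub_distrib, E1, E2, sub_zero]
  have hterm : ∀ i ∈ Finset.univ,
      (0:ℝ) ≤ u i * (fv a c i y - fv a c i x)^2 / (fv a c i x * fv a c i y) := by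
    intro i _
    exact div_nonneg (mul_nonneg (hu i).le (sq_nonneg _)) (hpq i).le
  have hzero' := (Finset.sum_eq_zero_iff_of_nonneg hterm).mp key
  have hbzero : ∀ i : Fin n, fv a c i y - fv a c i x = 0 := by
    intro i
    have h0 := hzero' i (Finset.mem_univ i)
    have hne : fv a c i x * fv a c i y ≠ 0 := ne_of_gt (hpq i)
    have := (div_eq_zero_iff.mp h0).resolve_right hne
    have h2 := (mul_eq_zero.mp this).resolve_left (ne_of_gt (hu i))
    exact pow_eq_zero_iff (by norm_num) |>.mp h2
  have hv : (fun j => y j - x j) = 0 := by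
    apply span_zero hzero
    intro i
    rw [hb i, hbzero i]
  funext j
  have h3 := congrFun hv j
  have h4 : y j - x j = 0 := h3
  linarith

/-- cells containing critical points are bounded -/
lemma crit_cell_bounded (hzero : ∀ (t : ℝ) (θ : Fin d → ℝ), (∀ i, c i * t + ∑ j, a i j * θ j = 0) →
      t = 0 ∧ θ = 0) {u : Fin n → ℝ} (hu : ∀ i, 0 < u i)
    {x : Fin d → ℝ} (hx : x ∈ realCrit a c u) :
    Bornology.IsBounded (cell a c x) := by
  by_contra hnb
  rw [isBounded_iff_forall_norm_le] at hnb
  push_neg at hnb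
  have hseq : ∀ m : ℕ, ∃ y ∈ cell a c x, (m:ℝ) + 1 < ‖y‖ := fun m => hnb ((m:ℝ) + 1)
  choose y hy hnorm using hseq
  have hnorm_pos : ∀ m, 0 < ‖y m‖ := fun m => lt_of_le_of_lt (by positivity) (hnorm m)
  set w : ℕ → (Fin d → ℝ) := fun m => (‖y m‖)⁻¹ • y m with hwdef
  have hw : ∀ m, w m ∈ Metric.sphere (0 : Fin d → ℝ) 1 := by
    intro m
    simp only [Metric.mem_sphere, dist_zero_right, hwdef, norm_smul, norm_inv, norm_norm]
    exact inv_mul_cancel₀ (hnorm_pos m).ne'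
  obtain ⟨v, hv, φ, hφ, hlim⟩ := (isCompact_sphere (0:Fin d → ℝ) 1).tendsto_subseq hw
  -- the inner-product-like limit is nonnegative
  have hL : ∀ i, 0 ≤ fv a c i x * (∑ j, a i j * v j) := by
    intro i
    set K := |fv a c i x * c i| with hK
    set g : ℕ → ℝ := fun m => fv a c i x * (∑ j, a i j * w (φ m) j) + ‖y (φ m)‖⁻¹ * K
      with hg
    have hsum : ∀ m, ∑ j, a i j * w m j = ‖y m‖⁻¹ * (fv a c i (y m) - c i) := by
      intro m
      have h1 : ∑ j, a i j * w m j = ‖y m‖⁻¹ * ∑ j, a i j * y m j := by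
        rw [Finset.mul_sum]
        exact Finset.sum_congr rfl fun j _ => by
          simp only [hwdef, Pi.smul_apply, smul_eq_mul]; ring
      rw [h1]
      congr 1
      unfold fv
      ring
    have hg_nonneg : ∀ m, 0 ≤ g m := by
      intro m
      have h1 : 0 < fv a c i x * fv a c i (y (φ m)) := hy (φ m) i
      have h2 : fv a c i x * c i ≤ K := le_abs_self _
      have h3 : (0:ℝ) < ‖y (φ m)‖⁻¹ := inv_pos.mpr (hnorm_pos (φ m))
      have e : g m = ‖y (φ m)‖⁻¹ * (fv a c i x * fv a c i (y (φ m)))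
          - ‖y (φ m)‖⁻¹ * (fv a c i x * c i) + ‖y (φ m)‖⁻¹ * K := by
        rw [hg]
        simp only
        rw [hsum (φ m)]
        ring
      rw [e]
      nlinarith [mul_pos h3 h1, mul_le_mul_of_nonneg_left h2 h3.le]
    have hinv_tendsto : Tendsto (fun m => ‖y (φ m)‖⁻¹) atTop (nhds 0) := by
      apply Tendsto.inv_tendsto_atTop
      apply tendsto_atTop_mono (f := fun m : ℕ => (m:ℝ) + 1)
      · intro m
        calc (m:ℝ) + 1 ≤ (φ m : ℝ) + 1 := by
              have h5 : m ≤ φ m := hφ.le_apply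
              have h6 : (m:ℝ) ≤ (φ m : ℝ) := Nat.cast_le.mpr h5
              linarith
        _ ≤ ‖y (φ m)‖ := (hnorm (φ m)).le
      · exact tendsto_atTop_add_const_right _ 1 tendsto_natCast_atTop_atTop
    have hcont : Continuous (fun z : Fin d → ℝ => fv a c i x * (∑ j, a i j * z j)) :=
      continuous_const.mul (continuous_finset_sum _ fun j _ =>
        continuous_const.mul (continuous_apply j))
    have hg_lim : Tendsto g atTop (nhds (fv a c i x * (∑ j, a i j * v j) + 0 * K)) := by
      apply Tendsto.add
      · exact (hcont.tendsto v).comp hlim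
      · exact hinv_tendsto.mul_const K
    have := ge_of_tendsto' hg_lim hg_nonneg
    linarith [this]
  -- combine with the critical equations
  have heq := sum_dir hx v
  have hterm_eq : ∀ i : Fin n, u i * (∑ j, a i j * v j) / fv a c i x
      = u i * (fv a c i x * (∑ j, a i j * v j)) / (fv a c i x)^2 := by
    intro i
    have hp := hx.1 i
    field_simp
  have hterm_nonneg : ∀ i ∈ Finset.univ,
      (0:ℝ) ≤ u i * (∑ j, a i j * v j) / fv a c i x := by
    intro i _
    rw [hterm_eq i]
    have hp2 : (0:ℝ) < (fv a c i x)^2 := by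
      have := hx.1 i
      positivity
    exact div_nonneg (mul_nonneg (hu i).le (hL i)) hp2.le
  have hall := (Finset.sum_eq_zero_iff_of_nonneg hterm_nonneg).mp heq
  have hv0 : v = 0 := by
    apply span_zero hzero
    intro i
    have h0 := hall i (Finset.mem_univ i)
    have hp := hx.1 i
    have := (div_eq_zero_iff.mp h0).resolve_right hp
    exact (mul_eq_zero.mp this).resolve_left (ne_of_gt (hu i))
  rw [hv0] at hv
  simp at hv

/-- every bounded cell contains a critical point -/
lemma exists_crit {u : Fin n → ℝ} (hu : ∀ i : Fin n, (0:ℝ) < u i) {x : Fin d → ℝ} (hx : x ∈ Uc a c)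
    (hb : Bornology.IsBounded (cell a c x)) :
    ∃ z ∈ realCrit a c u, z ∈ cell a c x := by
  set S := cell a c x with hS
  set ψ : (Fin d → ℝ) → ℝ := fun y => ∏ i, |fv a c i y| ^ (u i) with hψ
  have hψcont : Continuous ψ := by
    apply continuous_finset_prod
    intro i _
    exact ((continuous_fv i).abs).rpow_const (fun y => Or.inr (hu i).le)
  have hKc : IsCompact (closure S) :=
    Metric.isCompact_of_isClosed_isBounded isClosed_closure hb.closure
  have hKne : (closure S).Nonempty := ⟨x, subset_closure (mem_cell_self hx)⟩
  obtain ⟨z, hzK, hzmax⟩ := hKc.exists_isMaxOn hKne hψcont.continuousOn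
  have hxpos : 0 < ψ x :=
    Finset.prod_pos fun i _ => Real.rpow_pos_of_pos (abs_pos.mpr (hx i)) _
  have hzS : z ∈ S := by
    have hcl : closure S ⊆ {y | ∀ i, 0 ≤ fv a c i x * fv a c i y} := by
      apply closure_minimal
      · intro y hy i; exact (hy i).le
      · have he : {y : Fin d → ℝ | ∀ i, 0 ≤ fv a c i x * fv a c i y}
            = ⋂ i, (fun y => fv a c i x * fv a c i y) ⁻¹' (Ici 0) := by
          ext y; simp
        rw [he]
        exact isClosed_iInter fun i =>
          isClosed_Ici.preimage (continuous_const.mul (continuous_fv i))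
    have hne : ∀ i, fv a c i z ≠ 0 := by
      intro i h0
      have hz0 : ψ z = 0 := by
        apply Finset.prod_eq_zero (Finset.mem_univ i)
        rw [h0, abs_zero, Real.zero_rpow (ne_of_gt (hu i))]
      have hle : ψ x ≤ ψ z := hzmax (subset_closure (mem_cell_self hx))
      rw [hz0] at hle
      linarith
    intro i
    exact lt_of_le_of_ne (hcl hzK i) (Ne.symm (mul_ne_zero (hx i) (hne i)))
  have hz0 : ∀ i, fv a c i z ≠ 0 := fun i => cell_subset_Uc x hzS i
  set Φ : (Fin d → ℝ) → ℝ := fun y => ∑ i, u i * Real.log (fv a c i y) with hΦ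
  have hψΦ : ∀ y ∈ S, ψ y = Real.exp (Φ y) := by
    intro y hyS
    rw [hΦ, hψ]
    simp only
    rw [Real.exp_sum]
    apply Finset.prod_congr rfl
    intro i _
    have hy0 : fv a c i y ≠ 0 := cell_subset_Uc x hyS i
    rw [Real.rpow_def_of_pos (abs_pos.mpr hy0), Real.log_abs, mul_comm]
  have hlocal : IsLocalMax Φ z := by
    filter_upwards [(isOpen_cell x).mem_nhds hzS] with y hyS
    have h1 : ψ y ≤ ψ z := hzmax (subset_closure hyS)
    rw [hψΦ y hyS, hψΦ z hzS] at h1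
    exact Real.exp_le_exp.mp h1
  set ℓ : Fin n → (Fin d → ℝ) →L[ℝ] ℝ :=
    fun i => ∑ j, a i j • ContinuousLinearMap.proj j with hℓ
  have hℓ_apply : ∀ i (w : Fin d → ℝ), ℓ i w = ∑ j, a i j * w j := by
    intro i w
    rw [hℓ]
    simp [ContinuousLinearMap.sum_apply, ContinuousLinearMap.smul_apply]
  have hfvderiv : ∀ i (y : Fin d → ℝ), HasFDerivAt (fv a c i) (ℓ i) y := by
    intro i y
    have h1 : HasFDerivAt (fun y : Fin d → ℝ => ∑ j, a i j * y j) (ℓ i) y := by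
      rw [hℓ]
      apply HasFDerivAt.fun_sum
      intro j _
      have hp : HasFDerivAt (fun y : Fin d → ℝ => y j)
          (ContinuousLinearMap.proj j : (Fin d → ℝ) →L[ℝ] ℝ) y :=
        (ContinuousLinearMap.proj (R := ℝ) (φ := fun _ : Fin d => ℝ) j).hasFDerivAt
      exact hp.const_mul (a i j)
    exact h1.const_add (c i)
  set L : (Fin d → ℝ) →L[ℝ] ℝ := ∑ i, u i • ((fv a c i z)⁻¹ • ℓ i) with hLdef
  have hΦderiv : HasFDerivAt Φ L z := by
    rw [hΦ, hLdef]
    apply HasFDerivAt.fun_sum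
    intro i _
    exact ((hfvderiv i z).log (hz0 i)).const_mul (u i)
  have hL0 : L = 0 := hlocal.hasFDerivAt_eq_zero hΦderiv
  refine ⟨z, ⟨hz0, ?_⟩, hzS⟩
  intro j
  have happ : L (Pi.single j 1) = 0 := by rw [hL0]; rfl
  rw [hLdef] at happ
  simp only [ContinuousLinearMap.sum_apply, ContinuousLinearMap.smul_apply,
    smul_eq_mul] at happ
  have hsingle : ∀ i : Fin n, ℓ i (Pi.single j 1) = a i j := by
    intro i
    rw [hℓ_apply]
    rw [Finset.sum_eq_single j]
    · rw [Pi.single_eq_same, mul_one]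
    · intro k _ hk
      rw [Pi.single_eq_of_ne hk, mul_zero]
    · intro h
      exact absurd (Finset.mem_univ j) h
  rw [Finset.sum_congr rfl (fun i _ => by rw [hsingle i])] at happ
  rw [← happ]
  apply Finset.sum_congr rfl
  intro i _
  rw [div_eq_mul_inv]
  ring

/-- realness of complex critical points -/
lemma crit_real (hzero : ∀ (t : ℝ) (θ : Fin d → ℝ), (∀ i, c i * t + ∑ j, a i j * θ j = 0) →
      t = 0 ∧ θ = 0) {u : Fin n → ℝ} (hu : ∀ i, 0 < u i)
    {θ : Fin d → ℂ} (hθ : θ ∈ linearCriticalSet a c u) : ∀ j, (θ j).im = 0 := by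
  set y : Fin d → ℝ := fun j => (θ j).im with hy
  suffices hy0 : y = 0 by
    intro j
    have : y j = 0 := by rw [hy0]; rfl
    exact this
  set F : Fin n → ℂ := fun i => (c i : ℂ) + ∑ k, (a i k : ℂ) * θ k with hF
  have hFne : ∀ i, F i ≠ 0 := hθ.1
  set A : Fin n → ℝ := fun i => ∑ k, a i k * y k with hA
  have hFim : ∀ i, (F i).im = A i := by
    intro i
    rw [hF, hA]
    simp [Complex.add_im, Complex.im_sum, Complex.mul_im]
    rfl
  have key : ∑ i, ((u i * A i : ℝ) : ℂ) / F i = 0 := by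
    have h1 : ∑ j, (y j : ℂ) * ∑ i, (u i : ℂ) * (a i j : ℂ) / F i = 0 := by
      apply Finset.sum_eq_zero
      intro j _
      rw [hθ.2 j, mul_zero]
    have h2 : ∀ j : Fin d, (y j : ℂ) * ∑ i, (u i : ℂ) * (a i j : ℂ) / F i
        = ∑ i, (y j : ℂ) * ((u i : ℂ) * (a i j : ℂ) / F i) := fun j =>
      Finset.mul_sum _ _ _
    rw [Finset.sum_congr rfl (fun j _ => h2 j), Finset.sum_comm] at h1
    rw [← h1]
    apply Finset.sum_congr rfl
    intro i _
    rw [hA]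
    push_cast
    rw [Finset.mul_sum, Finset.sum_div]
    apply Finset.sum_congr rfl
    intro j _
    ring
  have him : (0:ℝ) = ∑ i, u i * A i * (-(A i) / Complex.normSq (F i)) := by
    have h3 := congrArg Complex.im key
    rw [Complex.im_sum] at h3
    have h4 : ∀ i : Fin n, (((u i * A i : ℝ) : ℂ) / F i).im
        = u i * A i * (-(F i).im / Complex.normSq (F i)) := by
      intro i
      rw [div_eq_mul_inv, Complex.mul_im, Complex.inv_im, Complex.ofReal_re,
        Complex.ofReal_im, zero_mul, add_zero]
    rw [Finset.sum_congr rfl (fun i _ => h4 i)] at h3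
    rw [Finset.sum_congr rfl (fun i (_ : i ∈ Finset.univ) => by rw [hFim i])] at h3
    simpa using h3.symm
  have key2 : ∑ i, u i * (A i)^2 / Complex.normSq (F i) = 0 := by
    have : ∑ i, u i * (A i)^2 / Complex.normSq (F i)
        = -∑ i, u i * A i * (-(A i) / Complex.normSq (F i)) := by
      rw [← Finset.sum_neg_distrib]
      apply Finset.sum_congr rfl
      intro i _
      field_simp
    rw [this, ← him, neg_zero]
  have hterm : ∀ i ∈ Finset.univ, (0:ℝ) ≤ u i * (A i)^2 / Complex.normSq (F i) := by
    intro i _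
    exact div_nonneg (mul_nonneg (hu i).le (sq_nonneg _)) (Complex.normSq_nonneg _)
  have hall := (Finset.sum_eq_zero_iff_of_nonneg hterm).mp key2
  apply span_zero hzero
  intro i
  have h0 := hall i (Finset.mem_univ i)
  have hns : Complex.normSq (F i) ≠ 0 := by
    simpa [Complex.normSq_eq_zero] using hFne i
  have h5 := (div_eq_zero_iff.mp h0).resolve_right hns
  have h6 := (mul_eq_zero.mp h5).resolve_left (ne_of_gt (hu i))
  have h7 : A i = 0 := pow_eq_zero_iff (by norm_num) |>.mp h6
  rw [hA] at h7
  exact h7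

lemma sign_trans {p q r : ℝ} (hpq : 0 < p * q) (hpr : 0 < p * r) : 0 < q * r := by
  rcases mul_pos_iff.mp hpq with ⟨hp, hq⟩ | ⟨hp, hq⟩ <;>
    rcases mul_pos_iff.mp hpr with ⟨hp2, hr⟩ | ⟨hp2, hr⟩
  · exact mul_pos hq hr
  · linarith
  · linarith
  · exact mul_pos_of_neg_of_neg hq hr

lemma cell_eq_of_mem {x y : Fin d → ℝ} (hmem : y ∈ cell a c x) :
    cell a c x = cell a c y := by
  ext z
  constructor
  · intro hz i
    exact sign_trans (hmem i) (hz i)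
  · intro hz i
    have h1 : 0 < fv a c i y * fv a c i x := by
      rw [mul_comm]; exact hmem i
    exact sign_trans h1 (hz i)

end MLdeg

open MLdeg

/-- **Varchenko/Terao.** Suppose the homogenizations
`Fᵢ = cᵢθ₀ + ∑ⱼ aᵢⱼθⱼ` vanish simultaneously only at the origin of `ℝ^{d+1}`.  Then for
all positive `u` in a nonempty Zariski-open set of `ℝ^n` (given by the nonvanishing of a
nonzero polynomial `G`), the set of complex critical points of `∏ᵢ fᵢ^{uᵢ}` is finite, all
of them are real, and their number equals the number of bounded regions of the real
arrangement `⋃ᵢ {fᵢ = 0}`. -/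
theorem ml_degree_of_hyperplane_arrangement
    (d n : ℕ) (a : Fin n → Fin d → ℝ) (c : Fin n → ℝ)
    (hzero : ∀ (t : ℝ) (θ : Fin d → ℝ), (∀ i, c i * t + ∑ j, a i j * θ j = 0) →
      t = 0 ∧ θ = 0) :
    ∃ G : MvPolynomial (Fin n) ℝ, G ≠ 0 ∧
      ∀ u : Fin n → ℝ, MvPolynomial.eval u G ≠ 0 → (∀ i, 0 < u i) →
        (linearCriticalSet a c u).Finite ∧
        (∀ θ ∈ linearCriticalSet a c u, ∀ j : Fin d, (θ j).im = 0) ∧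
        (linearCriticalSet a c u).ncard = (linearBoundedRegions a c).ncard := by
  refine ⟨1, one_ne_zero, ?_⟩
  intro u _ hu
  set Ψ : (Fin d → ℝ) → Set (Fin d → ℝ) := fun x => connectedComponentIn (Uc a c) x
    with hΨ
  -- the bijection between real critical points and bounded regions
  have hbij : Set.BijOn Ψ (realCrit a c u) (linearBoundedRegions a c) := by
    refine ⟨?_, ?_, ?_⟩
    · intro x hx
      have hxU : x ∈ Uc a c := hx.1
      refine ⟨?_, x, hx.1, rfl⟩
      rw [hΨ]
      simp only
      rw [component_eq_cell hxU]
      exact crit_cell_bounded hzero hu hx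
    · intro x hx x' hx' hee
      have hx'mem : x' ∈ Ψ x' := mem_connectedComponentIn hx'.1
      rw [← hee, hΨ] at hx'mem
      simp only at hx'mem
      rw [component_eq_cell hx.1] at hx'mem
      exact crit_inj hzero hu hx hx' hx'mem
    · rintro K ⟨hbK, x₀, hx₀, hKeq⟩
      have hx₀U : x₀ ∈ Uc a c := hx₀
      have hKcell : K = cell a c x₀ := by
        rw [hKeq]
        exact component_eq_cell hx₀U
      have hbcell : Bornology.IsBounded (cell a c x₀) := hKcell ▸ hbK
      obtain ⟨z, hz, hzcell⟩ := exists_crit hu hx₀U hbcell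
      refine ⟨z, hz, ?_⟩
      rw [hΨ]
      simp only
      have hzcomp : z ∈ connectedComponentIn (Uc a c) x₀ := by
        rw [component_eq_cell hx₀U]
        exact hzcell
      rw [← connectedComponentIn_eq hzcomp, hKeq]
      rfl
  -- bounded regions are finite
  have hfinR : (linearBoundedRegions a c).Finite := by
    classical
    set σ : Set (Fin d → ℝ) → (Fin n → Prop) := fun K i => ∃ y ∈ K, 0 < fv a c i y
      with hσ
    apply Set.Finite.of_finite_image (f := σ) (Set.toFinite _)
    rintro K1 ⟨hb1, x1, hx1, hK1⟩ K2 ⟨hb2, x2, hx2, hK2⟩ heq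
    have hx1U : x1 ∈ Uc a c := hx1
    have hx2U : x2 ∈ Uc a c := hx2
    have hK1c : K1 = cell a c x1 := by rw [hK1]; exact component_eq_cell hx1U
    have hK2c : K2 = cell a c x2 := by rw [hK2]; exact component_eq_cell hx2U
    have hchar : ∀ (x : Fin d → ℝ), x ∈ Uc a c →
        ∀ i, σ (cell a c x) i ↔ 0 < fv a c i x := by
      intro x hxU i
      constructor
      · rintro ⟨y, hyc, hy⟩
        have := hyc i
        rcases mul_pos_iff.mp this with ⟨h1, _⟩ | ⟨_, h2⟩
        · exact h1
        · linarith
      · intro hpos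
        exact ⟨x, mem_cell_self hxU, hpos⟩
    have hsame : ∀ i, 0 < fv a c i x1 * fv a c i x2 := by
      intro i
      have h12 : (0 < fv a c i x1) ↔ (0 < fv a c i x2) := by
        rw [← hchar x1 hx1U i, ← hchar x2 hx2U i, ← hK1c, ← hK2c, heq]
      rcases (hx1U i).lt_or_gt with hneg | hpos
      · have h2 : ¬ (0 < fv a c i x2) := fun h => absurd (h12.mpr h) (by linarith)
        have h2' : fv a c i x2 < 0 := (hx2U i).lt_or_gt.resolve_right h2
        exact mul_pos_of_neg_of_neg hneg h2'
      · exact mul_pos hpos (h12.mp hpos)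
    rw [hK1c, hK2c, cell_eq_of_mem (hsame : x2 ∈ cell a c x1)]
  -- real critical points are finite, same cardinality
  have hfinC : (realCrit a c u).Finite := by
    apply Set.Finite.of_finite_image (f := Ψ) _ hbij.injOn
    rw [hbij.image_eq]
    exact hfinR
  have hncardR : (realCrit a c u).ncard = (linearBoundedRegions a c).ncard := by
    rw [← hbij.image_eq, Set.ncard_image_of_injOn hbij.injOn]
  -- complex critical points = image of real ones
  set emb : (Fin d → ℝ) → (Fin d → ℂ) := fun x j => (x j : ℂ) with hemb
  have hembinj : Function.Injective emb := by
    intro x x' h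
    funext j
    have h2 : ((x j : ℂ)) = ((x' j : ℂ)) := congrFun h j
    exact_mod_cast h2
  have hden : ∀ (x : Fin d → ℝ) (i : Fin n),
      (c i : ℂ) + ∑ k, (a i k : ℂ) * (emb x) k = ((fv a c i x : ℝ) : ℂ) := by
    intro x i
    rw [hemb]
    simp only
    unfold fv
    push_cast
    ring
  have hsum_cast : ∀ (x : Fin d → ℝ) (j : Fin d),
      ∑ i, (u i : ℂ) * (a i j : ℂ) / ((c i : ℂ) + ∑ k, (a i k : ℂ) * (emb x) k)
        = ((∑ i, u i * a i j / fv a c i x : ℝ) : ℂ) := by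
    intro x j
    rw [Finset.sum_congr rfl (fun i (_ : i ∈ Finset.univ) => by rw [hden x i])]
    push_cast
    rfl
  have hccrit : linearCriticalSet a c u = emb '' realCrit a c u := by
    apply Set.Subset.antisymm
    · intro θ hθ
      have him := crit_real hzero hu hθ
      set x : Fin d → ℝ := fun j => (θ j).re with hx
      have hθx : θ = emb x := by
        funext j
        apply Complex.ext
        · rfl
        · rw [him j]; rfl
      refine ⟨x, ⟨?_, ?_⟩, hθx.symm⟩
      · intro i
        have h1 := hθ.1 i
        rw [hθx, hden x i] at h1
        exact_mod_cast h1
      · intro j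
        have h2 := hθ.2 j
        rw [hθx, hsum_cast x j] at h2
        exact_mod_cast h2
    · rintro θ ⟨x, hx, rfl⟩
      constructor
      · intro i
        rw [hden x i]
        exact_mod_cast hx.1 i
      · intro j
        rw [hsum_cast x j]
        exact_mod_cast hx.2 j
  refine ⟨?_, ?_, ?_⟩
  · rw [hccrit]
    exact hfinC.image emb
  · intro θ hθ
    exact crit_real hzero hu hθ
  · rw [hccrit, Set.ncard_image_of_injOn hembinj.injOn, hncardR]
end

section
/- Let u_1, u_2, u_3, u_4 be positive real numbers and N = u_1 + u_2 + u_3 + u_4. Consider the independence model for two binary random variables, f_1 = θ_1θ_2, f_2 = (1−θ_1)θ_2, f_3 = θ_1(1−θ_2), f_4 = (1−θ_1)(1−θ_2). Then the point θ̂ = ((u_1+u_3)/N, (u_1+u_2)/N) satisfies f_i(θ̂) ≠ 0 for all i, and it is the unique point θ ∈ ℂ² with f_i(θ) ≠ 0 for all i and ∑_{i=1}^4 u_i·(∂f_i/∂θ_j)(θ)/f_i(θ) = 0 for j = 1,2. In particular the maximum likelihood degree of this model is one. -/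
open MvPolynomial

/-- The independence model for two binary random variables:
`f₁ = θ₁θ₂`, `f₂ = (1-θ₁)θ₂`, `f₃ = θ₁(1-θ₂)`, `f₄ = (1-θ₁)(1-θ₂)`. -/
noncomputable def indepModel : Fin 4 → MvPolynomial (Fin 2) ℂ :=
  ![X 0 * X 1, (1 - X 0) * X 1, X 0 * (1 - X 1), (1 - X 0) * (1 - X 1)]

/-- The maximum likelihood estimate
`θ̂ = ((u₁+u₃)/N, (u₁+u₂)/N)` with `N = u₁+u₂+u₃+u₄`, as a point of `ℂ²`. -/
noncomputable def indepMLE (u : Fin 4 → ℝ) : Fin 2 → ℂ :=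
  ![(((u 0 + u 2) / (u 0 + u 1 + u 2 + u 3) : ℝ) : ℂ),
    (((u 0 + u 1) / (u 0 + u 1 + u 2 + u 3) : ℝ) : ℂ)]

lemma crit_aux0 (a b c d x y : ℂ) (hx : x ≠ 0) (h1x : 1 - x ≠ 0) (hy : y ≠ 0)
    (h1y : 1 - y ≠ 0) (h : (a + c) * (1 - x) = (b + d) * x) :
    a * y / (x * y) + -(b * y) / ((1 - x) * y) + c * (1 - y) / (x * (1 - y)) +
      d * (y - 1) / ((1 - x) * (1 - y)) = 0 := by
  have e1 : a * y / (x * y) = a / x := by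
    field_simp
  have e2 : -(b * y) / ((1 - x) * y) = -b / (1 - x) := by
    field_simp
  have e3 : c * (1 - y) / (x * (1 - y)) = c / x := by
    field_simp
  have e4 : d * (y - 1) / ((1 - x) * (1 - y)) = -d / (1 - x) := by
    field_simp; ring
  rw [e1, e2, e3, e4]
  field_simp
  linear_combination h

lemma crit_aux1 (a b c d x y : ℂ) (hx : x ≠ 0) (h1x : 1 - x ≠ 0) (hy : y ≠ 0)
    (h1y : 1 - y ≠ 0) (h : (a + b) * (1 - y) = (c + d) * y) :
    a * x / (x * y) + b * (1 - x) / ((1 - x) * y) + -(c * x) / (x * (1 - y)) +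
      d * (x - 1) / ((1 - x) * (1 - y)) = 0 := by
  have e1 : a * x / (x * y) = a / y := by
    field_simp
  have e2 : b * (1 - x) / ((1 - x) * y) = b / y := by
    field_simp
  have e3 : -(c * x) / (x * (1 - y)) = -c / (1 - y) := by
    field_simp
  have e4 : d * (x - 1) / ((1 - x) * (1 - y)) = -d / (1 - y) := by
    field_simp; ring
  rw [e1, e2, e3, e4]
  field_simp
  linear_combination h

/-- For positive data `u₁, u₂, u₃, u₄`, the point
`θ̂ = ((u₁+u₃)/N, (u₁+u₂)/N)` lies off the zero set of the independence model and is the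
unique critical point of `f₁^{u₁}f₂^{u₂}f₃^{u₃}f₄^{u₄}` in `ℂ²`; in particular the ML
degree of the independence model for two binary random variables is one. -/
theorem indep_model_ml_degree_one (u : Fin 4 → ℝ) (hu : ∀ i, 0 < u i) :
    (∀ i, eval (indepMLE u) (indepModel i) ≠ 0) ∧
    {θ : Fin 2 → ℂ | (∀ i, eval θ (indepModel i) ≠ 0) ∧
      ∀ j : Fin 2, ∑ i, (u i : ℂ) * eval θ (pderiv j (indepModel i)) /
        eval θ (indepModel i) = 0} = {indepMLE u} := by
  have hN : (0:ℝ) < u 0 + u 1 + u 2 + u 3 := by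
    have := hu 0; have := hu 1; have := hu 2; have := hu 3; linarith
  have hNc : ((u 0 + u 1 + u 2 + u 3 : ℝ) : ℂ) ≠ 0 := by
    exact_mod_cast hN.ne'
  have h02 : ((u 0 + u 2 : ℝ) : ℂ) ≠ 0 := by
    have := hu 0; have := hu 2; exact_mod_cast (by linarith : (0:ℝ) < u 0 + u 2).ne'
  have h01 : ((u 0 + u 1 : ℝ) : ℂ) ≠ 0 := by
    have := hu 0; have := hu 1; exact_mod_cast (by linarith : (0:ℝ) < u 0 + u 1).ne'
  have h13 : ((u 1 + u 3 : ℝ) : ℂ) ≠ 0 := by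
    have := hu 1; have := hu 3; exact_mod_cast (by linarith : (0:ℝ) < u 1 + u 3).ne'
  have h23 : ((u 2 + u 3 : ℝ) : ℂ) ≠ 0 := by
    have := hu 2; have := hu 3; exact_mod_cast (by linarith : (0:ℝ) < u 2 + u 3).ne'
  -- values of the MLE
  have ha0 : (indepMLE u 0 : ℂ) ≠ 0 := by
    simp only [indepMLE, Matrix.cons_val_zero]
    rw [Complex.ofReal_div]
    exact div_ne_zero h02 hNc
  have hb0 : (indepMLE u 1 : ℂ) ≠ 0 := by
    simp only [indepMLE, Matrix.cons_val_one, Matrix.head_cons]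
    rw [Complex.ofReal_div]
    exact div_ne_zero h01 hNc
  have ha1 : (1 : ℂ) - indepMLE u 0 ≠ 0 := by
    simp only [indepMLE, Matrix.cons_val_zero]
    rw [Complex.ofReal_div, sub_ne_zero]
    intro h
    rw [eq_comm, div_eq_one_iff_eq hNc] at h
    have : (u 0 + u 2 : ℝ) = u 0 + u 1 + u 2 + u 3 := by exact_mod_cast h
    have := hu 1; have := hu 3; linarith
  have hb1 : (1 : ℂ) - indepMLE u 1 ≠ 0 := by
    simp only [indepMLE, Matrix.cons_val_one, Matrix.head_cons, Matrix.cons_val_zero]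
    rw [Complex.ofReal_div, sub_ne_zero]
    intro h
    rw [eq_comm, div_eq_one_iff_eq hNc] at h
    have : (u 0 + u 1 : ℝ) = u 0 + u 1 + u 2 + u 3 := by exact_mod_cast h
    have := hu 2; have := hu 3; linarith
  have hnv : ∀ i, eval (indepMLE u) (indepModel i) ≠ 0 := by
    intro i
    fin_cases i <;> simp [indepModel] <;>
      exact ⟨by first | exact ha0 | exact ha1, by first | exact hb0 | exact hb1⟩
  refine ⟨hnv, ?_⟩
  ext θ
  simp only [Set.mem_setOf_eq, Set.mem_singleton_iff]
  constructor
  · rintro ⟨hz, hcrit⟩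
    -- extract nonvanishing of coordinates
    have h0 := hz 0; have h1 := hz 1; have h2 := hz 2
    simp only [indepModel, Fin.isValue, Matrix.cons_val_zero, Matrix.cons_val_one,
      Matrix.head_cons, Matrix.cons_val_two, Matrix.tail_cons, map_mul, map_sub, map_one,
      eval_X, mul_ne_zero_iff] at h0 h1 h2
    obtain ⟨hx, hy⟩ := h0
    obtain ⟨h1x, -⟩ := h1
    obtain ⟨-, h1y⟩ := h2
    have e0 := hcrit 0
    have e1 := hcrit 1
    simp [indepModel, Fin.sum_univ_four, pderiv_X, Pi.single] at e0 e1
    field_simp at e0 e1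
    have hC0 : θ 0 * (1 - θ 0) * θ 1 ^ 2 * (1 - θ 1) ^ 2 ≠ 0 :=
      mul_ne_zero (mul_ne_zero (mul_ne_zero hx h1x) (pow_ne_zero 2 hy)) (pow_ne_zero 2 h1y)
    have hC1 : θ 0 ^ 2 * (1 - θ 0) ^ 2 * θ 1 * (1 - θ 1) ≠ 0 :=
      mul_ne_zero (mul_ne_zero (mul_ne_zero (pow_ne_zero 2 hx) (pow_ne_zero 2 h1x)) hy) h1y
    have key0 : ((u 0 : ℂ) + u 2) * (1 - θ 0) - ((u 1 : ℂ) + u 3) * θ 0 = 0 := by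
      apply mul_left_cancel₀ hC0
      rw [mul_zero]
      linear_combination θ 0 * (1 - θ 0) * θ 1 ^ 2 * (1 - θ 1) * e0
    have key1 : ((u 0 : ℂ) + u 1) * (1 - θ 1) - ((u 2 : ℂ) + u 3) * θ 1 = 0 := by
      apply mul_left_cancel₀ hC1
      rw [mul_zero]
      linear_combination θ 0 ^ 2 * (1 - θ 0) * θ 1 * (1 - θ 1) * e1
    have hx0 : θ 0 = ((u 0 + u 2 : ℝ) : ℂ) / ((u 0 + u 1 + u 2 + u 3 : ℝ) : ℂ) := by
      rw [eq_div_iff hNc]; push_cast; linear_combination -key0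
    have hy0 : θ 1 = ((u 0 + u 1 : ℝ) : ℂ) / ((u 0 + u 1 + u 2 + u 3 : ℝ) : ℂ) := by
      rw [eq_div_iff hNc]; push_cast; linear_combination -key1
    funext j
    fin_cases j <;> simp [indepMLE] <;>
      first
        | exact hx0.trans (by push_cast; ring)
        | exact hy0.trans (by push_cast; ring)
  · rintro rfl
    have hv0 : indepMLE u 0 = ((u 0 + u 2 : ℝ) : ℂ) / ((u 0 + u 1 + u 2 + u 3 : ℝ) : ℂ) := by
      simp [indepMLE]
    have hv1 : indepMLE u 1 = ((u 0 + u 1 : ℝ) : ℂ) / ((u 0 + u 1 + u 2 + u 3 : ℝ) : ℂ) := by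
      simp [indepMLE]
    have hNc' : ((u 0 : ℂ) + u 1 + u 2 + u 3) ≠ 0 := by push_cast at hNc; exact hNc
    have r0 : ((u 0 : ℂ) + u 2) * (1 - indepMLE u 0) = ((u 1 : ℂ) + u 3) * indepMLE u 0 := by
      rw [hv0]; push_cast; field_simp [hNc']; ring
    have r1 : ((u 0 : ℂ) + u 1) * (1 - indepMLE u 1) = ((u 2 : ℂ) + u 3) * indepMLE u 1 := by
      rw [hv1]; push_cast; field_simp [hNc']; ring
    refine ⟨hnv, ?_⟩
    intro j
    fin_cases j
    · simp [indepModel, Fin.sum_univ_four, pderiv_X, Pi.single]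
      exact crit_aux0 (u 0) (u 1) (u 2) (u 3) (indepMLE u 0) (indepMLE u 1)
        ha0 ha1 hb0 hb1 r0
    · simp [indepModel, Fin.sum_univ_four, pderiv_X, Pi.single]
      exact crit_aux1 (u 0) (u 1) (u 2) (u 3) (indepMLE u 0) (indepMLE u 1)
        ha0 ha1 hb0 hb1 r1
end

section
/- Let u, v ≥ 1 be integers, R = ℂ[x,y], and g = x^v − y^u. A ℂ-derivation ξ = a·∂/∂x + b·∂/∂y of R (a, b ∈ R) satisfies ξ(x) ∈ (x) and ξ(g) ∈ (g) if and only if there exist ψ, λ ∈ R with a = xψ and u·b = v·yψ + u·λg. Equivalently, the R-module of derivations ξ of R with ξ((x)) ⊆ (x) and ξ((g)) ⊆ (g) is free of rank 2 with basis {u·x·∂/∂x + v·y·∂/∂y, g·∂/∂y}. -/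
open MvPolynomial

private lemma primeY : Prime (X 1 : MvPolynomial (Fin 2) ℂ) := by
  let e : MvPolynomial (Fin 2) ℂ ≃ₐ[ℂ] Polynomial (MvPolynomial (Fin 1) ℂ) :=
    (renameEquiv ℂ (Equiv.swap 0 1)).trans (finSuccEquiv ℂ 1)
  have he : e (X 1) = Polynomial.X := by
    simp [e, renameEquiv_apply, rename_X, Equiv.swap_apply_right, finSuccEquiv_X_zero]
  rw [← MulEquiv.prime_iff e.toRingEquiv.toMulEquiv]
  show Prime (e (X 1))
  rw [he]
  exact Polynomial.prime_X

private lemma notYdvdX (n : ℕ) : ¬ (X 1 : MvPolynomial (Fin 2) ℂ) ∣ X 0 ^ (n + 1) := by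
  intro h
  have h2 := primeY.dvd_of_dvd_pow h
  rw [X_dvd_X] at h2
  exact absurd h2 (by decide)

private lemma gne (m n : ℕ) : (X 0 ^ (n+1) - X 1 ^ (m+1) : MvPolynomial (Fin 2) ℂ) ≠ 0 := by
  intro h
  have := congrArg (eval (fun i : Fin 2 => if i = 0 then (1:ℂ) else 0)) h
  simp at this

private lemma hCinv (m : ℕ) :
    (C (((m:ℂ)+1)⁻¹) : MvPolynomial (Fin 2) ℂ) * ((m+1 : ℕ) : MvPolynomial (Fin 2) ℂ) = 1 := by
  have h1 : (((m+1:ℕ)) : MvPolynomial (Fin 2) ℂ) = C ((m:ℂ)+1) := by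
    rw [← map_natCast (C : ℂ →+* MvPolynomial (Fin 2) ℂ) (m+1)]
    push_cast
    ring_nf
  rw [h1, ← map_mul, inv_mul_cancel₀ (by exact_mod_cast Nat.succ_ne_zero m), map_one]


private lemma core (m n : ℕ) (a b : MvPolynomial (Fin 2) ℂ) :
    ((X 0 : MvPolynomial (Fin 2) ℂ) ∣ a ∧
      (X 0 ^ (n+1) - X 1 ^ (m+1) : MvPolynomial (Fin 2) ℂ) ∣
        (((n+1 : ℕ) : MvPolynomial (Fin 2) ℂ) * (X 0 ^ n * a)
          - ((m+1 : ℕ) : MvPolynomial (Fin 2) ℂ) * (X 1 ^ m * b))) ↔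
    ∃ p q : MvPolynomial (Fin 2) ℂ,
      a = p * (((m+1 : ℕ) : MvPolynomial (Fin 2) ℂ) * X 0) ∧
      b = p * (((n+1 : ℕ) : MvPolynomial (Fin 2) ℂ) * X 1) + q * (X 0 ^ (n+1) - X 1 ^ (m+1)) := by
  constructor
  · rintro ⟨⟨ψ, hψ⟩, ⟨c, hc⟩⟩
    push_cast at hc
    have h2 : (X 0 : MvPolynomial (Fin 2) ℂ)^(n+1) * (((n : MvPolynomial (Fin 2) ℂ)+1) * ψ - c)
        = X 1 ^ m * (((m : MvPolynomial (Fin 2) ℂ)+1) * b - X 1 * c) := by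
      linear_combination hc - ((n : MvPolynomial (Fin 2) ℂ)+1) * X 0 ^ n * hψ
    obtain ⟨s, hs⟩ : (X 1 : MvPolynomial (Fin 2) ℂ)^m ∣
        (((n : MvPolynomial (Fin 2) ℂ)+1) * ψ - c) := by
      refine primeY.pow_dvd_of_dvd_mul_left m (notYdvdX n) ⟨((m : MvPolynomial (Fin 2) ℂ)+1) * b - X 1 * c, ?_⟩
      linear_combination h2
    have hb : ((m : MvPolynomial (Fin 2) ℂ)+1) * b
        = ((n : MvPolynomial (Fin 2) ℂ)+1) * (X 1 * ψ) + s * (X 0 ^ (n+1) - X 1 ^ (m+1)) := by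
      refine mul_left_cancel₀ (pow_ne_zero m (X_ne_zero (1 : Fin 2))) ?_
      linear_combination -h2 + (X 0 ^ (n+1) - X 1 ^ (m+1)) * hs
    refine ⟨C (((m:ℂ)+1)⁻¹) * ψ, C (((m:ℂ)+1)⁻¹) * s, ?_, ?_⟩
    · have hC := hCinv m
      push_cast at hC ⊢
      linear_combination hψ - (ψ * X 0) * hC
    · have hC := hCinv m
      push_cast at hC
      push_cast
      linear_combination C (((m:ℂ)+1)⁻¹) * hb - b * hC
  · rintro ⟨p, q, ha, hb⟩
    push_cast at ha hb
    constructor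
    · exact ⟨((m+1 : ℕ) : MvPolynomial (Fin 2) ℂ) * p, by push_cast; linear_combination ha⟩
    · refine ⟨((m : MvPolynomial (Fin 2) ℂ)+1) * ((n : MvPolynomial (Fin 2) ℂ)+1) * p
        - ((m : MvPolynomial (Fin 2) ℂ)+1) * X 1 ^ m * q, ?_⟩
      push_cast
      linear_combination ((n : MvPolynomial (Fin 2) ℂ)+1) * X 0 ^ n * ha
        - ((m : MvPolynomial (Fin 2) ℂ)+1) * X 1 ^ m * hb

/-- In `R = ℂ[x,y]` with `g = x^v - y^u` (`u, v ≥ 1`), a derivation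
`ξ = a·∂/∂x + b·∂/∂y` (so `a = ξ(x)`, `b = ξ(y)`) is logarithmic for the divisor
`{x·g = 0}`, i.e. `ξ(x) ∈ (x)` and `ξ(g) ∈ (g)`, if and only if there are `ψ, λ ∈ R` with
`a = xψ` and `u·b = v·yψ + u·λg`.  Equivalently, the module of such derivations is free of
rank 2 with basis `{u·x·∂/∂x + v·y·∂/∂y, g·∂/∂y}`, i.e. every such derivation has unique
coordinates `(p, q)` with `a = p·(u·x)` and `b = p·(v·y) + q·g`. -/
theorem logarithmic_derivations_of_x_and_cusp (u v : ℕ) (hu : 1 ≤ u) (hv : 1 ≤ v)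
    (g : MvPolynomial (Fin 2) ℂ) (hg : g = X 0 ^ v - X 1 ^ u) :
    (∀ ξ : Derivation ℂ (MvPolynomial (Fin 2) ℂ) (MvPolynomial (Fin 2) ℂ),
      (ξ (X 0) ∈ Ideal.span {(X 0 : MvPolynomial (Fin 2) ℂ)} ∧ ξ g ∈ Ideal.span {g}) ↔
      ∃ ψ lam : MvPolynomial (Fin 2) ℂ,
        ξ (X 0) = X 0 * ψ ∧
        (u : MvPolynomial (Fin 2) ℂ) * ξ (X 1) =
          (v : MvPolynomial (Fin 2) ℂ) * (X 1 * ψ) +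
          (u : MvPolynomial (Fin 2) ℂ) * (lam * g)) ∧
    (∀ ξ : Derivation ℂ (MvPolynomial (Fin 2) ℂ) (MvPolynomial (Fin 2) ℂ),
      (ξ (X 0) ∈ Ideal.span {(X 0 : MvPolynomial (Fin 2) ℂ)} ∧ ξ g ∈ Ideal.span {g}) ↔
      ∃! pq : MvPolynomial (Fin 2) ℂ × MvPolynomial (Fin 2) ℂ,
        ξ (X 0) = pq.1 * ((u : MvPolynomial (Fin 2) ℂ) * X 0) ∧
        ξ (X 1) = pq.1 * ((v : MvPolynomial (Fin 2) ℂ) * X 1) + pq.2 * g) := by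
  obtain ⟨m, rfl⟩ : ∃ m, u = m + 1 := ⟨u - 1, by omega⟩
  obtain ⟨n, rfl⟩ : ∃ n, v = n + 1 := ⟨v - 1, by omega⟩
  subst hg
  have key : ∀ ξ : Derivation ℂ (MvPolynomial (Fin 2) ℂ) (MvPolynomial (Fin 2) ℂ),
      (ξ (X 0) ∈ Ideal.span {(X 0 : MvPolynomial (Fin 2) ℂ)} ∧
        ξ (X 0 ^ (n+1) - X 1 ^ (m+1)) ∈
          Ideal.span {(X 0 ^ (n+1) - X 1 ^ (m+1) : MvPolynomial (Fin 2) ℂ)}) ↔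
      ∃ p q : MvPolynomial (Fin 2) ℂ,
        ξ (X 0) = p * (((m+1 : ℕ) : MvPolynomial (Fin 2) ℂ) * X 0) ∧
        ξ (X 1) = p * (((n+1 : ℕ) : MvPolynomial (Fin 2) ℂ) * X 1)
          + q * (X 0 ^ (n+1) - X 1 ^ (m+1)) := by
    intro ξ
    have hgx : ξ (X 0 ^ (n+1) - X 1 ^ (m+1))
        = ((n+1 : ℕ) : MvPolynomial (Fin 2) ℂ) * (X 0 ^ n * ξ (X 0))
          - ((m+1 : ℕ) : MvPolynomial (Fin 2) ℂ) * (X 1 ^ m * ξ (X 1)) := by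
      rw [map_sub, Derivation.leibniz_pow, Derivation.leibniz_pow]
      simp only [smul_eq_mul, nsmul_eq_mul, Nat.add_sub_cancel]
    simp only [Ideal.mem_span_singleton, hgx]
    exact core m n _ _
  constructor
  · intro ξ
    rw [key ξ]
    constructor
    · rintro ⟨p, q, ha, hb⟩
      refine ⟨((m+1 : ℕ) : MvPolynomial (Fin 2) ℂ) * p, q, ?_, ?_⟩
      · push_cast at ha ⊢
        linear_combination ha
      · push_cast at hb ⊢
        linear_combination ((m : MvPolynomial (Fin 2) ℂ) + 1) * hb
    · rintro ⟨ψ, lam, hψ, hb1⟩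
      have hC := hCinv m
      refine ⟨C (((m:ℂ)+1)⁻¹) * ψ, lam, ?_, ?_⟩
      · push_cast at hC ⊢
        linear_combination hψ - (ψ * X 0) * hC
      · push_cast at hC hb1 ⊢
        linear_combination C (((m:ℂ)+1)⁻¹) * hb1
          - (ξ (X 1) - lam * (X 0 ^ (n+1) - X 1 ^ (m+1))) * hC
  · intro ξ
    rw [key ξ]
    constructor
    · rintro ⟨p, q, ha, hb⟩
      refine ⟨(p, q), ⟨ha, hb⟩, ?_⟩
      rintro ⟨p', q'⟩ ⟨ha', hb'⟩
      have hx0 : (((m+1 : ℕ)) : MvPolynomial (Fin 2) ℂ) * X 0 ≠ 0 :=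
        mul_ne_zero (Nat.cast_ne_zero.mpr (Nat.succ_ne_zero m)) (X_ne_zero (0 : Fin 2))
      have hp : p' = p := mul_right_cancel₀ hx0 (ha'.symm.trans ha)
      have hq : q' = q := by
        refine mul_right_cancel₀ (gne m n) ?_
        linear_combination hb - hb' - (((n+1 : ℕ) : MvPolynomial (Fin 2) ℂ) * X 1) * hp
      simp [Prod.ext_iff, hp, hq]
    · rintro ⟨⟨p, q⟩, ⟨ha, hb⟩, -⟩
      exact ⟨p, q, ha, hb⟩
end
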